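/- (Main reduction, YES case.) Let p ≥ 1, γ ≥ 1, r > 0, τ > 0, let b_1, …, b_n ∈ ℤ^d be linearly independent, let t ∈ ℤ^d, let L = L(b_1, …, b_n), and assume λ_n^{(p)}(L)^p ≤ τ · r^p. Set α^p = max(r^p(τ − 1), γ^p r^p / (2^p − 1)) with α > 0, and let L' ⊂ ℝ^{d+1} be the lattice generated by (b_1, 0), …, (b_n, 0), (t, α). If there exists v ∈ L with ‖v − t‖_p ≤ r, then L' contains n+1 linearly independent vectors each of ℓ_p norm at most (r^p + α^p)^{1/p}; that is, λ_{n+1}^{(p)}(L')^p ≤ r^p + α^p. -/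
import Mathlib


/-- The ℓ_p "norm" of a vector `x ∈ ℝ^d`: `(∑ i, |x i| ^ p) ^ (1/p)`. -/
noncomputable def lpNorm (p : ℝ) {d : ℕ} (x : Fin d → ℝ) : ℝ :=
  (∑ i, |x i| ^ p) ^ (1 / p)

/-- Membership in the lattice generated by the vectors `b 0, …, b (n-1)`. -/
def inLattice {n d : ℕ} (b : Fin n → Fin d → ℝ) (v : Fin d → ℝ) : Prop :=
  ∃ z : Fin n → ℤ, v = ∑ i, (z i : ℝ) • b i

/-- The `k`-th successive minimum (in the ℓ_p norm) of the lattice generated by `b`. -/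
noncomputable def succMin (p : ℝ) {n d : ℕ} (b : Fin n → Fin d → ℝ) (k : ℕ) : ℝ :=
  sInf {ℓ : ℝ | ∃ v : Fin k → Fin d → ℝ,
    LinearIndependent ℝ v ∧ (∀ i, inLattice b (v i)) ∧ ∀ i, lpNorm p (v i) ≤ ℓ}

lemma lpNorm_nonneg (p : ℝ) {d : ℕ} (x : Fin d → ℝ) : 0 ≤ lpNorm p x :=
  Real.rpow_nonneg (Finset.sum_nonneg fun _ _ => Real.rpow_nonneg (abs_nonneg _) p) _

lemma lpNorm_rpow {p : ℝ} (hp : 0 < p) {d : ℕ} (x : Fin d → ℝ) :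
    lpNorm p x ^ p = ∑ i, |x i| ^ p := by
  rw [lpNorm, ← Real.rpow_mul
    (Finset.sum_nonneg fun _ _ => Real.rpow_nonneg (abs_nonneg _) p),
    one_div_mul_cancel hp.ne', Real.rpow_one]

lemma lpNorm_le_of_rpow_le {p : ℝ} (hp : 0 < p) {d : ℕ} {x : Fin d → ℝ} {c : ℝ}
    (h : ∑ i, |x i| ^ p ≤ c) : lpNorm p x ≤ c ^ (1 / p) :=
  Real.rpow_le_rpow (Finset.sum_nonneg fun _ _ => Real.rpow_nonneg (abs_nonneg _) p) h
    (by positivity)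

lemma abs_le_lpNorm {p : ℝ} (hp : 0 < p) {d : ℕ} (x : Fin d → ℝ) (j : Fin d) :
    |x j| ≤ lpNorm p x := by
  have h1 : |x j| = (|x j| ^ p) ^ (1 / p) := by
    rw [← Real.rpow_mul (abs_nonneg _), mul_one_div_cancel hp.ne', Real.rpow_one]
  rw [h1, lpNorm]
  exact Real.rpow_le_rpow (Real.rpow_nonneg (abs_nonneg _) _)
    (Finset.single_le_sum (fun i _ => Real.rpow_nonneg (abs_nonneg _) p) (Finset.mem_univ j))
    (by positivity)

lemma sum_snoc_abs (p : ℝ) {d : ℕ} (y : Fin d → ℝ) (c : ℝ) :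
    ∑ j : Fin (d + 1), |Fin.snoc y c j| ^ p = (∑ j, |y j| ^ p) + |c| ^ p := by
  rw [Fin.sum_univ_castSucc]
  simp

lemma inLattice_int {n d : ℕ} (b : Fin n → Fin d → ℤ) (v : Fin d → ℝ)
    (h : inLattice (fun i j => (b i j : ℝ)) v) :
    ∃ f : Fin d → ℤ, v = fun j => (f j : ℝ) := by
  obtain ⟨z, hz⟩ := h
  refine ⟨fun j => ∑ i, z i * b i j, ?_⟩
  funext j
  rw [hz]
  simp [Finset.sum_apply]

lemma inLattice_self {n d : ℕ} (b : Fin n → Fin d → ℝ) (i : Fin n) :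
    inLattice b (b i) := by
  refine ⟨fun k => if k = i then 1 else 0, ?_⟩
  simp [apply_ite, ite_smul]

lemma succMin_attained {p : ℝ} (hp : 0 < p) {n d : ℕ} (b : Fin n → Fin d → ℤ)
    (hb : LinearIndependent ℝ (fun i : Fin n => fun j : Fin d => (b i j : ℝ))) :
    ∃ v : Fin n → Fin d → ℝ,
      LinearIndependent ℝ v ∧
      (∀ i, inLattice (fun i : Fin n => fun j : Fin d => (b i j : ℝ)) (v i)) ∧
      ∀ i, lpNorm p (v i) ≤ succMin p (fun i : Fin n => fun j : Fin d => (b i j : ℝ)) n := by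
  set B := fun i : Fin n => fun j : Fin d => (b i j : ℝ) with hB
  rcases Nat.eq_zero_or_pos n with hn | hn
  · subst hn
    exact ⟨fun i => i.elim0, linearIndependent_empty_type, fun i => i.elim0, fun i => i.elim0⟩
  haveI : NeZero n := ⟨hn.ne'⟩
  haveI : Nonempty (Fin n) := Fin.pos_iff_nonempty.1 hn
  set S : Set ℝ := {ℓ : ℝ | ∃ v : Fin n → Fin d → ℝ,
    LinearIndependent ℝ v ∧ (∀ i, inLattice B (v i)) ∧ ∀ i, lpNorm p (v i) ≤ ℓ} with hS
  have hSmin : succMin p B n = sInf S := rfl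
  have hne : S.Nonempty := by
    refine ⟨∑ i, lpNorm p (B i), B, hb, fun i => inLattice_self B i, fun i => ?_⟩
    exact Finset.single_le_sum (fun k _ => lpNorm_nonneg p (B k)) (Finset.mem_univ i)
  have hbdd : BddBelow S := by
    refine ⟨0, fun ℓ hℓ => ?_⟩
    obtain ⟨v, _, _, h3⟩ := hℓ
    exact le_trans (lpNorm_nonneg p (v ⟨0, hn⟩)) (h3 ⟨0, hn⟩)
  set C : ℝ := sInf S + 1 with hC
  obtain ⟨ℓ₁, hℓ₁S, hℓ₁lt⟩ := (csInf_lt_iff hbdd hne).1 (lt_add_one (sInf S))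
  set T : Set (Fin n → Fin d → ℝ) := {v | LinearIndependent ℝ v ∧
    (∀ i, inLattice B (v i)) ∧ ∀ i, lpNorm p (v i) ≤ C} with hT
  obtain ⟨u₁, hu₁li, hu₁lat, hu₁le⟩ := hℓ₁S
  have hu₁T : u₁ ∈ T := ⟨hu₁li, hu₁lat, fun i => le_trans (hu₁le i) hℓ₁lt.le⟩
  have hTne : T.Nonempty := ⟨u₁, hu₁T⟩
  set M : ℤ := ⌈C⌉ with hM
  have hTfin : T.Finite := by
    apply Set.Finite.subset (Finset.finite_toSet
      (Finset.image (fun f : Fin n → Fin d → ℤ => fun i j => (f i j : ℝ))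
        (Fintype.piFinset fun _ => Fintype.piFinset fun _ => Finset.Icc (-M) M)))
    intro v hv
    obtain ⟨_, h2, h3⟩ := hv
    choose f hf using fun i => inLattice_int b (v i) (h2 i)
    simp only [Finset.coe_image, Set.mem_image, Finset.mem_coe, Fintype.mem_piFinset,
      Finset.mem_Icc]
    refine ⟨f, fun i j => ?_, by funext i; exact (hf i).symm⟩
    have habs : |(f i j : ℝ)| ≤ C := by
      have h := le_trans (abs_le_lpNorm hp (v i) j) (h3 i)
      rw [hf i] at h
      simpa using h
    obtain ⟨hlo, hhi⟩ := abs_le.1 (habs.trans (Int.le_ceil C))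
    exact ⟨by exact_mod_cast hlo, by exact_mod_cast hhi⟩
  obtain ⟨v₀, hv₀T, hv₀min⟩ := Set.exists_min_image T
    (fun v => Finset.univ.sup' Finset.univ_nonempty fun i => lpNorm p (v i)) hTfin hTne
  obtain ⟨hv₀li, hv₀lat, _⟩ := hv₀T
  have hkey : (Finset.univ.sup' Finset.univ_nonempty fun i => lpNorm p (v₀ i)) ≤ sInf S := by
    apply le_csInf hne
    intro ℓ hℓ
    obtain ⟨u, huli, hulat, hule⟩ := hℓ
    by_cases hc : ℓ < C
    · have huT : u ∈ T := ⟨huli, hulat, fun i => le_trans (hule i) hc.le⟩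
      exact le_trans (hv₀min u huT) (Finset.sup'_le _ _ fun i _ => hule i)
    · push_neg at hc
      exact le_trans (le_trans (hv₀min u₁ hu₁T)
        (Finset.sup'_le _ _ fun i _ => le_trans (hu₁le i) hℓ₁lt.le)) hc
  refine ⟨v₀, hv₀li, hv₀lat, fun i => ?_⟩
  rw [hSmin]
  exact le_trans (Finset.le_sup' (fun i => lpNorm p (v₀ i)) (Finset.mem_univ i)) hkey

/-- main reduction, YES case: assume `λ_n^{(p)}(L)^p ≤ τ·r^p`, set
`α^p = max(r^p(τ−1), γ^p r^p/(2^p−1))` with `α > 0`, and let `L'` be the lattice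
generated by `(b_1,0), …, (b_n,0), (t,α)` (the family `w`).  If some `v ∈ L` satisfies
`‖v − t‖_p ≤ r`, then `L'` contains `n+1` linearly independent vectors each of ℓ_p norm
at most `(r^p + α^p)^{1/p}`; that is, `λ_{n+1}^{(p)}(L')^p ≤ r^p + α^p`. -/
theorem stmt9 (p γ r τ : ℝ) (hp : 1 ≤ p) (hγ : 1 ≤ γ) (hr : 0 < r) (hτ : 0 < τ)
    (n d : ℕ) (b : Fin n → Fin d → ℤ)
    (hb : LinearIndependent ℝ (fun i : Fin n => fun j : Fin d => (b i j : ℝ)))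
    (t : Fin d → ℤ)
    (hmin : succMin p (fun i : Fin n => fun j : Fin d => (b i j : ℝ)) n ^ p ≤ τ * r ^ p)
    (α : ℝ) (hα : 0 < α)
    (hαp : α ^ p = max (r ^ p * (τ - 1)) (γ ^ p * r ^ p / (2 ^ p - 1)))
    (w : Fin (n + 1) → Fin (d + 1) → ℝ)
    (hw : w = Fin.snoc (fun i : Fin n => Fin.snoc (fun j => (b i j : ℝ)) (0 : ℝ))
      (Fin.snoc (fun j => (t j : ℝ)) α))
    (hyes : ∃ v : Fin d → ℝ,
      inLattice (fun i : Fin n => fun j : Fin d => (b i j : ℝ)) v ∧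
      lpNorm p (v - fun j => (t j : ℝ)) ≤ r) :
    (∃ u : Fin (n + 1) → Fin (d + 1) → ℝ,
      LinearIndependent ℝ u ∧ (∀ i, inLattice w (u i)) ∧
      ∀ i, lpNorm p (u i) ≤ (r ^ p + α ^ p) ^ (1 / p)) ∧
    succMin p w (n + 1) ^ p ≤ r ^ p + α ^ p := by
  have hp0 : 0 < p := lt_of_lt_of_le one_pos hp
  obtain ⟨v, hvlat, hvnorm⟩ := hyes
  obtain ⟨v₀, hv₀li, hv₀lat, hv₀le⟩ := succMin_attained hp0 b hb
  obtain ⟨z, hz⟩ := hvlat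
  -- arithmetic bounds
  have hbound : τ * r ^ p ≤ r ^ p + α ^ p := by
    have h1 : r ^ p * (τ - 1) ≤ α ^ p := hαp ▸ le_max_left _ _
    nlinarith
  have hrp : (0:ℝ) < r ^ p := Real.rpow_pos_of_pos hr p
  have hαpp : (0:ℝ) < α ^ p := Real.rpow_pos_of_pos hα p
  have hsum0 : (0:ℝ) ≤ r ^ p + α ^ p := by linarith
  -- coordinate-wise ℓ_p^p bounds
  have hv₀p : ∀ i, (∑ j, |v₀ i j| ^ p) ≤ r ^ p + α ^ p := by
    intro i
    have h1 := Real.rpow_le_rpow (lpNorm_nonneg p (v₀ i)) (hv₀le i) hp0.le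
    rw [lpNorm_rpow hp0] at h1
    exact le_trans h1 (le_trans hmin hbound)
  have hvt : (∑ j, |(t j : ℝ) - v j| ^ p) ≤ r ^ p := by
    have h1 := Real.rpow_le_rpow (lpNorm_nonneg p (v - fun j => (t j : ℝ))) hvnorm hp0.le
    rw [lpNorm_rpow hp0] at h1
    calc (∑ j, |(t j : ℝ) - v j| ^ p) = ∑ j, |(v - fun j => (t j : ℝ)) j| ^ p := by
          apply Finset.sum_congr rfl
          intro j _
          rw [Pi.sub_apply, abs_sub_comm]
      _ ≤ r ^ p := h1
  -- the witnessing family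
  set u : Fin (n + 1) → Fin (d + 1) → ℝ :=
    Fin.snoc (fun i => Fin.snoc (v₀ i) 0)
      (Fin.snoc (fun j => (t j : ℝ) - v j) α) with hu
  have hucast : ∀ i : Fin n, u i.castSucc = Fin.snoc (v₀ i) 0 := by
    intro i; rw [hu, Fin.snoc_castSucc]
  have hulast : u (Fin.last n) = Fin.snoc (fun j => (t j : ℝ) - v j) α := by
    rw [hu, Fin.snoc_last]
  -- norm bounds
  have hnorm : ∀ i, lpNorm p (u i) ≤ (r ^ p + α ^ p) ^ (1 / p) := by
    intro i
    induction i using Fin.lastCases with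
    | last =>
      rw [hulast]
      apply lpNorm_le_of_rpow_le hp0
      rw [sum_snoc_abs, abs_of_pos hα]
      linarith [hvt]
    | cast i =>
      rw [hucast]
      apply lpNorm_le_of_rpow_le hp0
      rw [sum_snoc_abs, abs_zero, Real.zero_rpow hp0.ne']
      linarith [hv₀p i]
  -- lattice membership
  have hlat : ∀ i, inLattice w (u i) := by
    intro i
    induction i using Fin.lastCases with
    | last =>
      obtain ⟨zi, hzi⟩ : inLattice (fun i : Fin n => fun j : Fin d => (b i j : ℝ)) v :=
        ⟨z, hz⟩
      refine ⟨Fin.snoc (fun k => -z k) 1, ?_⟩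
      rw [hulast]
      funext j
      rw [Finset.sum_apply, Fin.sum_univ_castSucc]
      simp only [hw, Fin.snoc_castSucc, Fin.snoc_last, Pi.smul_apply, smul_eq_mul,
        Int.cast_neg, Int.cast_one]
      induction j using Fin.lastCases with
      | last =>
        simp [Fin.snoc_last]
      | cast j =>
        have hvj : v j = ∑ k, (z k : ℝ) * b k j := by
          rw [hz, Finset.sum_apply]; simp
        simp only [Fin.snoc_castSucc]
        rw [hvj]
        have hneg : (∑ x : Fin n, (-(z x : ℝ)) * (b x j : ℝ))
            = -∑ k : Fin n, (z k : ℝ) * (b k j : ℝ) := by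
          rw [← Finset.sum_neg_distrib]
          exact Finset.sum_congr rfl fun k _ => neg_mul _ _
        rw [hneg]
        ring
    | cast i =>
      obtain ⟨zi, hzi⟩ := hv₀lat i
      refine ⟨Fin.snoc zi 0, ?_⟩
      rw [hucast]
      funext j
      rw [Finset.sum_apply, Fin.sum_univ_castSucc]
      simp only [hw, Fin.snoc_castSucc, Fin.snoc_last, Pi.smul_apply, smul_eq_mul,
        Int.cast_zero, zero_mul, add_zero]
      induction j using Fin.lastCases with
      | last =>
        simp [Fin.snoc_last]
      | cast j =>
        have hvj : v₀ i j = ∑ k, (zi k : ℝ) * b k j := by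
          rw [hzi, Finset.sum_apply]; simp
        simp only [Fin.snoc_castSucc]
        rw [hvj]
  -- linear independence
  have hli : LinearIndependent ℝ u := by
    rw [Fintype.linearIndependent_iff]
    intro g hg
    have hg' : ∀ j : Fin (d + 1), ∑ i, g i * u i j = 0 := by
      intro j
      have h := congrFun hg j
      simpa [Finset.sum_apply] using h
    have hglast : g (Fin.last n) = 0 := by
      have h := hg' (Fin.last d)
      rw [Fin.sum_univ_castSucc] at h
      simp only [hucast, hulast, Fin.snoc_last, mul_zero, Finset.sum_const_zero,
        zero_add] at h
      exact (mul_eq_zero.1 h).resolve_right hα.ne'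
    have hgcast : ∀ i : Fin n, g i.castSucc = 0 := by
      have hsum0' : ∑ i : Fin n, g i.castSucc • v₀ i = 0 := by
        funext j
        rw [Finset.sum_apply]
        have h := hg' j.castSucc
        rw [Fin.sum_univ_castSucc, hglast, zero_mul, add_zero] at h
        simp only [hucast, Fin.snoc_castSucc] at h
        simpa using h
      exact Fintype.linearIndependent_iff.1 hv₀li (fun i => g i.castSucc) hsum0'
    intro i
    induction i using Fin.lastCases with
    | last => exact hglast
    | cast i => exact hgcast i
  refine ⟨⟨u, hli, hlat, hnorm⟩, ?_⟩
  -- second conjunct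
  set S' : Set ℝ := {ℓ : ℝ | ∃ v : Fin (n + 1) → Fin (d + 1) → ℝ,
    LinearIndependent ℝ v ∧ (∀ i, inLattice w (v i)) ∧ ∀ i, lpNorm p (v i) ≤ ℓ} with hS'
  have hmem : (r ^ p + α ^ p) ^ (1 / p) ∈ S' := ⟨u, hli, hlat, hnorm⟩
  have hbdd' : BddBelow S' := by
    refine ⟨0, fun ℓ hℓ => ?_⟩
    obtain ⟨v', _, _, h3⟩ := hℓ
    exact le_trans (lpNorm_nonneg p (v' 0)) (h3 0)
  have h1 : succMin p w (n + 1) ≤ (r ^ p + α ^ p) ^ (1 / p) := csInf_le hbdd' hmem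
  have h2 : 0 ≤ succMin p w (n + 1) :=
    le_csInf ⟨_, hmem⟩ fun ℓ hℓ => by
      obtain ⟨v', _, _, h3⟩ := hℓ
      exact le_trans (lpNorm_nonneg p (v' 0)) (h3 0)
  calc succMin p w (n + 1) ^ p ≤ ((r ^ p + α ^ p) ^ (1 / p)) ^ p :=
        Real.rpow_le_rpow h2 h1 hp0.le
    _ = r ^ p + α ^ p := by
        rw [← Real.rpow_mul hsum0, one_div_mul_cancel hp0.ne', Real.rpow_one]
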